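/- Let Ω ⊂ ℝ^d be a convex body with Dubiner-type metric ρ, and for x ∈ Ω, r > 0 let B_ρ(x,r) := { y ∈ Ω : ρ(x,y) ≤ r }. Then for every x ∈ Ω and h > 0, λ_d(B_ρ(x,2h)) ≤ 4^d · λ_d(B_ρ(x,h)), where λ_d denotes Lebesgue measure on ℝ^d. -/
import Mathlib


open scoped InnerProductSpace

/-- `a_ξ = min_{z ∈ Ω} z·ξ`. -/
noncomputable def dubA {d : ℕ} (Ω : Set (EuclideanSpace ℝ (Fin d)))
    (ξ : EuclideanSpace ℝ (Fin d)) : ℝ :=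
  sInf ((fun z => ⟪z, ξ⟫_ℝ) '' Ω)

/-- The Dubiner-type metric
`ρ_Ω(x,y) = max_{ξ ∈ S^{d-1}} |√(x·ξ - a_ξ) - √(y·ξ - a_ξ)|`. -/
noncomputable def dubMetric {d : ℕ} (Ω : Set (EuclideanSpace ℝ (Fin d)))
    (x y : EuclideanSpace ℝ (Fin d)) : ℝ :=
  ⨆ ξ : Metric.sphere (0 : EuclideanSpace ℝ (Fin d)) 1,
    |Real.sqrt (⟪x, (ξ : EuclideanSpace ℝ (Fin d))⟫_ℝ - dubA Ω ξ) -
      Real.sqrt (⟪y, (ξ : EuclideanSpace ℝ (Fin d))⟫_ℝ - dubA Ω ξ)|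


/-- The ball `B_ρ(x,r)` in the Dubiner-type metric. -/
def dubBall {d : ℕ} (Ω : Set (EuclideanSpace ℝ (Fin d))) (x : EuclideanSpace ℝ (Fin d))
    (r : ℝ) : Set (EuclideanSpace ℝ (Fin d)) :=
  {y ∈ Ω | dubMetric Ω x y ≤ r}

lemma key_sqrt (u v : ℝ) (hu : 0 ≤ u) (hv : 0 ≤ v) :
    |Real.sqrt u - Real.sqrt ((3*u+v)/4)| ≤ (1/2) * |Real.sqrt u - Real.sqrt v| := by
  set s := Real.sqrt u with hsdef
  set t := Real.sqrt v with htdef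
  have hs : 0 ≤ s := Real.sqrt_nonneg u
  have ht : 0 ≤ t := Real.sqrt_nonneg v
  have hw : 0 ≤ (3*u+v)/4 := by positivity
  set r := Real.sqrt ((3*u+v)/4) with hrdef
  have hr : 0 ≤ r := Real.sqrt_nonneg _
  have hr2 : r^2 = (3*u+v)/4 := Real.sq_sqrt hw
  have hs2 : s^2 = u := Real.sq_sqrt hu
  have ht2 : t^2 = v := Real.sq_sqrt hv
  have hge : ((3*s+t)/4)^2 ≤ (3*u+v)/4 := by nlinarith [sq_nonneg (s-t)]
  have h4r : (3*s+t)/4 ≤ r := by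
    have := Real.sqrt_le_sqrt hge
    rwa [Real.sqrt_sq (by positivity), ← hrdef] at this
  have hsq : (s - r)^2 ≤ ((1/2) * (s - t))^2 := by
    nlinarith [mul_le_mul_of_nonneg_left h4r hs]
  have := Real.sqrt_le_sqrt hsq
  rwa [Real.sqrt_sq_eq_abs, Real.sqrt_sq_eq_abs, abs_mul,
    abs_of_pos (by norm_num : (0:ℝ) < 1/2)] at this

lemma dubA_le {d : ℕ} {Ω : Set (EuclideanSpace ℝ (Fin d))} (hΩc : IsCompact Ω)
    {z : EuclideanSpace ℝ (Fin d)} (hz : z ∈ Ω) (ξ : EuclideanSpace ℝ (Fin d)) :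
    dubA Ω ξ ≤ ⟪z, ξ⟫_ℝ := by
  obtain ⟨R, hR⟩ := hΩc.isBounded.exists_norm_le
  refine csInf_le ⟨-(R * ‖ξ‖), ?_⟩ ⟨z, hz, rfl⟩
  rintro a ⟨w, hw, rfl⟩
  have h1 := abs_real_inner_le_norm w ξ
  have h2 : ‖w‖ * ‖ξ‖ ≤ R * ‖ξ‖ := mul_le_mul_of_nonneg_right (hR w hw) (norm_nonneg ξ)
  have h3 := neg_abs_le (⟪w, ξ⟫_ℝ)
  simp only
  linarith

lemma dubA_ge {d : ℕ} {Ω : Set (EuclideanSpace ℝ (Fin d))} (hΩne : Ω.Nonempty)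
    {R : ℝ} (hR : ∀ z ∈ Ω, ‖z‖ ≤ R) (ξ : EuclideanSpace ℝ (Fin d)) (hξ : ‖ξ‖ = 1) :
    -R ≤ dubA Ω ξ := by
  obtain ⟨z, hz⟩ := hΩne
  refine le_csInf ⟨_, ⟨z, hz, rfl⟩⟩ ?_
  rintro a ⟨w, hw, rfl⟩
  have h1 := abs_real_inner_le_norm w ξ
  have h3 := neg_abs_le (⟪w, ξ⟫_ℝ)
  have := hR w hw
  simp only
  rw [hξ] at h1
  nlinarith

theorem dubBall_volume_doubling {d : ℕ} (hd : 1 ≤ d) (Ω : Set (EuclideanSpace ℝ (Fin d)))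
    (hΩc : IsCompact Ω) (hΩconv : Convex ℝ Ω) (hΩint : (interior Ω).Nonempty)
    (x : EuclideanSpace ℝ (Fin d)) (hx : x ∈ Ω) (h : ℝ) (hh : 0 < h) :
    MeasureTheory.volume (dubBall Ω x (2 * h)) ≤
      4 ^ d * MeasureTheory.volume (dubBall Ω x h) := by
  classical
  obtain ⟨R, hR⟩ := hΩc.isBounded.exists_norm_le
  have hR0 : 0 ≤ R := le_trans (norm_nonneg x) (hR x hx)
  have hξ0 : (EuclideanSpace.single (⟨0, hd⟩ : Fin d) (1:ℝ)) ∈ Metric.sphere (0 : EuclideanSpace ℝ (Fin d)) 1 := by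
    simp [mem_sphere_iff_norm, EuclideanSpace.norm_single]
  haveI : Nonempty (Metric.sphere (0 : EuclideanSpace ℝ (Fin d)) 1) := ⟨⟨_, hξ0⟩⟩
  -- boundedness of the family defining the sup
  have hbdd : ∀ y ∈ Ω, BddAbove (Set.range fun ξ : Metric.sphere (0 : EuclideanSpace ℝ (Fin d)) 1 =>
      |Real.sqrt (⟪x, (ξ : EuclideanSpace ℝ (Fin d))⟫_ℝ - dubA Ω ξ) - Real.sqrt (⟪y, (ξ : EuclideanSpace ℝ (Fin d))⟫_ℝ - dubA Ω ξ)|) := by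
    intro y hy
    refine ⟨Real.sqrt (2 * R), ?_⟩
    rintro _ ⟨ξ, rfl⟩
    have hξ1 : ‖(ξ : EuclideanSpace ℝ (Fin d))‖ = 1 := by
      simpa [mem_sphere_iff_norm] using ξ.2
    have hA := dubA_ge ⟨x, hx⟩ hR _ hξ1
    have bound : ∀ w ∈ Ω, Real.sqrt (⟪w, (ξ : EuclideanSpace ℝ (Fin d))⟫_ℝ - dubA Ω ξ) ≤ Real.sqrt (2 * R) := by
      intro w hw
      apply Real.sqrt_le_sqrt
      have h1 := abs_real_inner_le_norm w (ξ : EuclideanSpace ℝ (Fin d))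
      have h2 := le_abs_self (⟪w, (ξ : EuclideanSpace ℝ (Fin d))⟫_ℝ)
      have := hR w hw
      rw [hξ1] at h1
      nlinarith
    rw [abs_sub_le_iff]
    constructor
    · have := Real.sqrt_nonneg (⟪y, (ξ : EuclideanSpace ℝ (Fin d))⟫_ℝ - dubA Ω ξ)
      linarith [bound x hx]
    · have := Real.sqrt_nonneg (⟪x, (ξ : EuclideanSpace ℝ (Fin d))⟫_ℝ - dubA Ω ξ)
      linarith [bound y hy]
  set T : EuclideanSpace ℝ (Fin d) → EuclideanSpace ℝ (Fin d) := fun z => (4:ℝ) • (z - x) + x with hT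
  have hsub : dubBall Ω x (2*h) ⊆ T '' dubBall Ω x h := by
    rintro y ⟨hyΩ, hy⟩
    set z := (3/4 : ℝ) • x + (1/4 : ℝ) • y with hz
    have hzΩ : z ∈ Ω := hΩconv hx hyΩ (by norm_num) (by norm_num) (by norm_num)
    refine ⟨z, ⟨hzΩ, ?_⟩, ?_⟩
    · refine ciSup_le fun ξ => ?_
      have hxA : 0 ≤ ⟪x, (ξ : EuclideanSpace ℝ (Fin d))⟫_ℝ - dubA Ω ξ := sub_nonneg.mpr (dubA_le hΩc hx _)
      have hyA : 0 ≤ ⟪y, (ξ : EuclideanSpace ℝ (Fin d))⟫_ℝ - dubA Ω ξ := sub_nonneg.mpr (dubA_le hΩc hyΩ _)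
      have hinner : ⟪z, (ξ : EuclideanSpace ℝ (Fin d))⟫_ℝ - dubA Ω ξ =
          (3 * (⟪x, (ξ : EuclideanSpace ℝ (Fin d))⟫_ℝ - dubA Ω ξ) + (⟪y, (ξ : EuclideanSpace ℝ (Fin d))⟫_ℝ - dubA Ω ξ)) / 4 := by
        simp only [hz, inner_add_left, real_inner_smul_left]
        ring
      rw [hinner]
      have hterm : |Real.sqrt (⟪x, (ξ : EuclideanSpace ℝ (Fin d))⟫_ℝ - dubA Ω ξ) -
          Real.sqrt (⟪y, (ξ : EuclideanSpace ℝ (Fin d))⟫_ℝ - dubA Ω ξ)| ≤ dubMetric Ω x y :=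
        le_ciSup (hbdd y hyΩ) ξ
      calc |Real.sqrt (⟪x, (ξ : EuclideanSpace ℝ (Fin d))⟫_ℝ - dubA Ω ξ) -
            Real.sqrt ((3 * (⟪x, (ξ : EuclideanSpace ℝ (Fin d))⟫_ℝ - dubA Ω ξ) + (⟪y, (ξ : EuclideanSpace ℝ (Fin d))⟫_ℝ - dubA Ω ξ)) / 4)|
          ≤ (1/2) * |Real.sqrt (⟪x, (ξ : EuclideanSpace ℝ (Fin d))⟫_ℝ - dubA Ω ξ) -
            Real.sqrt (⟪y, (ξ : EuclideanSpace ℝ (Fin d))⟫_ℝ - dubA Ω ξ)| := key_sqrt _ _ hxA hyA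
        _ ≤ (1/2) * (2 * h) := by
            have : |Real.sqrt (⟪x, (ξ : EuclideanSpace ℝ (Fin d))⟫_ℝ - dubA Ω ξ) -
                Real.sqrt (⟪y, (ξ : EuclideanSpace ℝ (Fin d))⟫_ℝ - dubA Ω ξ)| ≤ 2 * h := hterm.trans hy
            linarith
        _ = h := by ring
    · show (4:ℝ) • (z - x) + x = y
      rw [hz]
      module
  have hhom : T '' dubBall Ω x h = AffineMap.homothety x (4:ℝ) '' dubBall Ω x h := by
    apply Set.image_congr'
    intro z
    simp [hT, AffineMap.homothety_apply]
  calc MeasureTheory.volume (dubBall Ω x (2*h))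
      ≤ MeasureTheory.volume (T '' dubBall Ω x h) := MeasureTheory.measure_mono hsub
    _ = ENNReal.ofReal |(4:ℝ) ^ (Module.finrank ℝ (EuclideanSpace ℝ (Fin d)))| * MeasureTheory.volume (dubBall Ω x h) := by
        rw [hhom, MeasureTheory.Measure.addHaar_image_homothety]
    _ = 4 ^ d * MeasureTheory.volume (dubBall Ω x h) := by
        congr 1
        rw [finrank_euclideanSpace, Fintype.card_fin, abs_of_nonneg (by positivity),
          ENNReal.ofReal_pow (by norm_num)]
        norm_num
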